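/- With P₄(t,q) ∈ ℚ[[t,q]] as above and coefficients c_{a,b}, one has c_{a,b} = 0 whenever 2b ≥ 3a + 10 (the integer form of b − (3/2)a ≥ 5). -/

import Mathlib

/-!
Write `w(a, b) = 2b - 3a`. Every monomial of the numerator has weight `w < 10`, while the two
denominator monomials `t⁴q⁶` and `t⁶q⁸` have weight `≤ 0` and positive `t`-degree. Dividing by
`1 - u` for such a monomial `u` gives the recursion `c_{a,b}(P) = c_{a,b}(P(1 - u)) + c_{(a,b) - u}(P)`,
so strong induction on `a` shows that the region `w ≥ 10` stays free of coefficients.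
-/

open MvPowerSeries

noncomputable def tVar : MvPowerSeries (Fin 2) ℚ := MvPowerSeries.X 0
noncomputable def qVar : MvPowerSeries (Fin 2) ℚ := MvPowerSeries.X 1

noncomputable def GORNum : MvPowerSeries (Fin 2) ℚ :=
  (1 + qVar ^ 2) * (1 + tVar ^ 2 * qVar ^ 4) * (1 + tVar ^ 3 * qVar ^ 6) *
    (1 + tVar ^ 7 * qVar ^ 10)

noncomputable def cf (a b : ℕ) (P : MvPowerSeries (Fin 2) ℚ) : ℚ :=
  MvPowerSeries.coeff (Finsupp.single (0 : Fin 2) a + Finsupp.single (1 : Fin 2) b) P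

lemma cf_add (a b : ℕ) (P Q : MvPowerSeries (Fin 2) ℚ) :
    cf a b (P + Q) = cf a b P + cf a b Q :=
  map_add _ _ _

lemma cf_smul (a b : ℕ) (r : ℚ) (P : MvPowerSeries (Fin 2) ℚ) : cf a b (r • P) = r • cf a b P :=
  map_smul _ _ _

lemma tVar_pow_mul_qVar_pow (m n : ℕ) :
    tVar ^ m * qVar ^ n =
      monomial (Finsupp.single (0 : Fin 2) m + Finsupp.single (1 : Fin 2) n) (1 : ℚ) := by
  rw [tVar, qVar, X_pow_eq, X_pow_eq, monomial_mul_monomial, one_mul]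

lemma eq_and_eq_of_single_add_single_eq {a b m n : ℕ}
    (h : Finsupp.single (0 : Fin 2) a + Finsupp.single 1 b =
      Finsupp.single 0 m + Finsupp.single 1 n) : a = m ∧ b = n :=
  ⟨by simpa using DFunLike.congr_fun h 0, by simpa using DFunLike.congr_fun h 1⟩

lemma cf_tVar_pow_mul_qVar_pow (a b m n : ℕ) :
    cf a b (tVar ^ m * qVar ^ n) = if a = m ∧ b = n then 1 else 0 := by
  rw [cf, tVar_pow_mul_qVar_pow, coeff_monomial]
  congr 1
  exact propext ⟨eq_and_eq_of_single_add_single_eq, by rintro ⟨rfl, rfl⟩; rfl⟩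

lemma cf_mul_tVar_pow_mul_qVar_pow (P : MvPowerSeries (Fin 2) ℚ) (a b m n : ℕ) :
    cf a b (P * (tVar ^ m * qVar ^ n)) =
      if m ≤ a ∧ n ≤ b then cf (a - m) (b - n) P else 0 := by
  rw [tVar_pow_mul_qVar_pow, cf, coeff_mul_monomial, mul_one]
  have hle : Finsupp.single (0 : Fin 2) m + Finsupp.single 1 n ≤
      Finsupp.single 0 a + Finsupp.single 1 b ↔ m ≤ a ∧ n ≤ b := by
    simp [Finsupp.le_def, Fin.forall_fin_two]
  have hsub : Finsupp.single (0 : Fin 2) a + Finsupp.single 1 b -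
      (Finsupp.single 0 m + Finsupp.single 1 n) =
      Finsupp.single 0 (a - m) + Finsupp.single 1 (b - n) := by
    ext i
    fin_cases i <;> simp
  simp only [hle, hsub, cf]

def supportedBelow (α β c : ℕ) : Submodule ℚ (MvPowerSeries (Fin 2) ℚ) where
  carrier := {P | ∀ a b, α * a + c ≤ β * b → cf a b P = 0}
  add_mem' hP hQ a b hab := by rw [cf_add, hP a b hab, hQ a b hab, add_zero]
  zero_mem' _ _ _ := map_zero _
  smul_mem' r P hP a b hab := by rw [cf_smul, hP a b hab, smul_zero]

section supportedBelow

variable {α β c : ℕ}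

lemma tVar_pow_mul_qVar_pow_mem_supportedBelow {m n : ℕ} (h : β * n < α * m + c) :
    tVar ^ m * qVar ^ n ∈ supportedBelow α β c := by
  intro a b hab
  rw [cf_tVar_pow_mul_qVar_pow, if_neg]
  rintro ⟨rfl, rfl⟩
  omega

lemma mem_supportedBelow_of_mul_one_sub {P : MvPowerSeries (Fin 2) ℚ} {m n : ℕ}
    (hm : 0 < m) (hmn : β * n ≤ α * m)
    (hP : P * (1 - tVar ^ m * qVar ^ n) ∈ supportedBelow α β c) :
    P ∈ supportedBelow α β c := by
  intro a
  induction a using Nat.strong_induction_on with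
  | _ a ih =>
    intro b hab
    have hsplit : P = P * (1 - tVar ^ m * qVar ^ n) + P * (tVar ^ m * qVar ^ n) := by ring
    rw [hsplit, cf_add, hP a b hab, zero_add, cf_mul_tVar_pow_mul_qVar_pow]
    split_ifs with h
    · obtain ⟨hma, hnb⟩ := h
      refine ih (a - m) (by omega) (b - n) ?_
      zify [hma, hnb] at hab hmn ⊢
      linarith
    · rfl

end supportedBelow

lemma GORNum_mem_supportedBelow : GORNum ∈ supportedBelow 3 2 10 := by
  have hexpand : GORNum = tVar ^ 0 * qVar ^ 0 + tVar ^ 0 * qVar ^ 2 + tVar ^ 2 * qVar ^ 4 +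
      tVar ^ 2 * qVar ^ 6 + tVar ^ 3 * qVar ^ 6 + tVar ^ 3 * qVar ^ 8 +
      tVar ^ 5 * qVar ^ 10 + tVar ^ 5 * qVar ^ 12 + tVar ^ 7 * qVar ^ 10 +
      tVar ^ 7 * qVar ^ 12 + tVar ^ 9 * qVar ^ 14 + tVar ^ 9 * qVar ^ 16 +
      tVar ^ 10 * qVar ^ 16 + tVar ^ 10 * qVar ^ 18 + tVar ^ 12 * qVar ^ 20 +
      tVar ^ 12 * qVar ^ 22 := by
    unfold GORNum; ring
  rw [hexpand]
  repeat' apply add_mem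
  all_goals exact tVar_pow_mul_qVar_pow_mem_supportedBelow (by norm_num)

theorem stmt6 (P₄ : MvPowerSeries (Fin 2) ℚ)
    (hP₄ : P₄ * ((1 - tVar ^ 4 * qVar ^ 6) * (1 - tVar ^ 6 * qVar ^ 8)) = GORNum)
    (a b : ℕ) (hab : 2 * b ≥ 3 * a + 10) :
    cf a b P₄ = 0 := by
  rw [← mul_assoc] at hP₄
  have hP₄_mem : P₄ ∈ supportedBelow 3 2 10 :=
    mem_supportedBelow_of_mul_one_sub (m := 4) (n := 6) (by norm_num) (by norm_num) <|
      mem_supportedBelow_of_mul_one_sub (m := 6) (n := 8) (by norm_num) (by norm_num) <|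
        hP₄ ▸ GORNum_mem_supportedBelow
  exact hP₄_mem a b hab
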